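/- Let d ≥ 2 and let p be a d-dimensional binary probability table with uniform margins. Let i₁ ≠ i₂ be indices in {1,…,d} and y₁, y₂ ∈ {0,1}. If p_α = 0 for every cell α with α_{i₁} = y₁ and α_{i₂} = y₂, then p_α = 0 for every cell α with α_{i₁} = 1 − y₁ and α_{i₂} = 1 − y₂. -/
import Mathlib


/-- If a `d`-dimensional binary probability table with uniform margins
vanishes on all cells with `α i₁ = y₁` and `α i₂ = y₂`, then it vanishes on all
cells with `α i₁ = 1 - y₁` and `α i₂ = 1 - y₂`. -/
theorem stmt_0 (d : ℕ) (hd : 2 ≤ d) (p : (Fin d → Fin 2) → ℝ)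
    (hnn : ∀ α, 0 ≤ p α) (hsum : ∑ α, p α = 1)
    (hmarg : ∀ i : Fin d,
      ∑ α ∈ Finset.univ.filter (fun α : Fin d → Fin 2 => α i = 0), p α = 1 / 2)
    (i₁ i₂ : Fin d) (hne : i₁ ≠ i₂) (y₁ y₂ : Fin 2)
    (hzero : ∀ α : Fin d → Fin 2, α i₁ = y₁ → α i₂ = y₂ → p α = 0) :
    ∀ α : Fin d → Fin 2, α i₁ = 1 - y₁ → α i₂ = 1 - y₂ → p α = 0 := by
  intro α hα1 hα2
  have hiff : ∀ x y : Fin 2, (¬ x = y) ↔ x = 1 - y := by decide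
  have hmarg' : ∀ i : Fin d, ∀ y : Fin 2,
      ∑ β ∈ Finset.univ.filter (fun β : Fin d → Fin 2 => β i = y), p β = 1 / 2 := by
    intro i y
    have hsplit := Finset.sum_filter_add_sum_filter_not Finset.univ
      (fun β : Fin d → Fin 2 => β i = 0) p
    rw [hsum, hmarg i] at hsplit
    fin_cases y
    · exact hmarg i
    · simp only [hiff] at hsplit
      norm_num at hsplit ⊢
      linarith
  -- Sum over β i₁ = y₁ split by β i₂ = y₂
  have h1 := Finset.sum_filter_add_sum_filter_not
    (Finset.univ.filter (fun β : Fin d → Fin 2 => β i₁ = y₁))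
    (fun β => β i₂ = y₂) p
  have hC : ∑ β ∈ (Finset.univ.filter (fun β : Fin d → Fin 2 => β i₁ = y₁)).filter
      (fun β => β i₂ = y₂), p β = 0 := by
    apply Finset.sum_eq_zero
    intro β hβ
    simp only [Finset.mem_filter] at hβ
    exact hzero β hβ.1.2 hβ.2
  rw [hC, zero_add, hmarg' i₁ y₁] at h1
  -- Sum over β i₂ = 1 - y₂ split by β i₁ = y₁
  have h2 := Finset.sum_filter_add_sum_filter_not
    (Finset.univ.filter (fun β : Fin d → Fin 2 => β i₂ = 1 - y₂))
    (fun β => β i₁ = y₁) p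
  rw [hmarg' i₂ (1 - y₂)] at h2
  have hA : ∑ β ∈ (Finset.univ.filter (fun β : Fin d → Fin 2 => β i₂ = 1 - y₂)).filter
      (fun β => β i₁ = y₁), p β
      = ∑ β ∈ (Finset.univ.filter (fun β : Fin d → Fin 2 => β i₁ = y₁)).filter
      (fun β => ¬ β i₂ = y₂), p β := by
    simp only [Finset.filter_filter, hiff]
    congr 1
    apply Finset.filter_congr
    intro β _
    constructor <;> exact fun h => ⟨h.2, h.1⟩
  rw [hA, h1] at h2
  have hB : ∑ β ∈ (Finset.univ.filter (fun β : Fin d → Fin 2 => β i₂ = 1 - y₂)).filter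
      (fun β => ¬ β i₁ = y₁), p β = 0 := by linarith
  have hmem : α ∈ (Finset.univ.filter (fun β : Fin d → Fin 2 => β i₂ = 1 - y₂)).filter
      (fun β => ¬ β i₁ = y₁) := by
    simp only [Finset.mem_filter, Finset.mem_univ, true_and]
    refine ⟨hα2, ?_⟩
    rw [hiff]
    exact hα1
  exact Finset.sum_eq_zero_iff_of_nonneg (fun β _ => hnn β) |>.mp hB α hmem
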